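/- Let α > 1, τ > 0, λ > 1, p(r) = |r|^α/α and p*(η) = |η|^{α'}/α' with 1/α + 1/α' = 1. There exist constants C(λ,τ) > 0 and D(τ,λ) > 0 such that for all η ∈ ℝ: D(τ,λ) exp(2τ p*(η/λ)) ≤ ∫_ℝ exp(2τ(rη − p(r))) dr ≤ C(λ,τ) exp(2τ p*(λη)). -/

import Mathlib

/-!
Upper bound: splitting `r * η = (r / λ) * (λ * η)` in Young's inequality gives
`r η - p(r) ≤ p*(λ η) - (1 - λ^(-α)) p(r)`, and `exp (-2τ (1 - λ^(-α)) p(r))` is integrable.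
Lower bound: by symmetry `η ≥ 0`. The maximiser of `r η - p(r)` is `t = η^(α'-1)`, and on
`[λ^(-α') t, t]` the exponent is at least `p*(η / λ)`; for `η ≥ 1` this interval has length
at least `1 - λ^(-α')`. For `η ≤ 1` the integral over `[0, 1]` already exceeds `exp (-2τ/α)`.
-/

open Real MeasureTheory Set

lemma integrable_exp_neg_mul_abs_rpow {b p : ℝ} (hb : 0 < b) (hp : 0 < p) :
    Integrable fun x : ℝ => exp (-b * |x| ^ p) := by
  have hIoi : IntegrableOn (fun y : ℝ => exp (-b * y ^ p)) (Ioi 0) := by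
    simpa using integrableOn_rpow_mul_exp_neg_mul_rpow (s := 0) (by norm_num) hp hb
  simpa using (integrable_fun_norm_addHaar (volume : Measure ℝ)
    (f := fun y => exp (-b * y ^ p))).2 (by simpa using hIoi)

lemma mul_sub_le_integral_of_le_on_Icc {f : ℝ → ℝ} (hf : Integrable f) (hf0 : 0 ≤ f)
    {a c m : ℝ} (hac : a ≤ c) (hm : ∀ r ∈ Icc a c, m ≤ f r) : m * (c - a) ≤ ∫ r, f r := by
  calc m * (c - a) = m * volume.real (Icc a c) := by simp [hac]
    _ ≤ ∫ r in Icc a c, f r :=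
      setIntegral_ge_of_const_le_real measurableSet_Icc measure_Icc_lt_top.ne hm hf.integrableOn
    _ ≤ ∫ r, f r := setIntegral_le_integral hf (.of_forall hf0)

lemma mul_sub_rpow_div_le {α α' lam : ℝ} (h : α.HolderConjugate α') (hlam : 0 < lam) (r η : ℝ) :
    r * η - |r| ^ α / α ≤ |lam * η| ^ α' / α' - (1 - lam⁻¹ ^ α) * (|r| ^ α / α) := by
  have hyoung : r * η ≤ (lam⁻¹ * |r|) ^ α / α + |lam * η| ^ α' / α' :=
    calc r * η ≤ |r| * |η| := by rw [← abs_mul]; exact le_abs_self _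
      _ = (lam⁻¹ * |r|) * |lam * η| := by rw [abs_mul, abs_of_pos hlam]; field_simp
      _ ≤ _ := young_inequality_of_nonneg (by positivity) (abs_nonneg _) h
  rw [mul_rpow (by positivity) (abs_nonneg r), mul_div_assoc] at hyoung
  linarith

lemma rpow_div_le_mul_sub_rpow_div {α α' e θ u : ℝ} (h : α.HolderConjugate α') (he : 0 ≤ e)
    (hθ : 0 ≤ θ) (hθu : θ * e ^ (α' - 1) ≤ u) (hu : u ≤ e ^ (α' - 1)) :
    θ * (e ^ α' / α') ≤ u * e - u ^ α / α := by
  have hu0 : 0 ≤ u := le_trans (by positivity) hθu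
  have hexp : (α' - 1) * (α - 1) = 1 := by linear_combination h.mul_eq_add
  have hua : u ^ (α - 1) ≤ e := by
    calc u ^ (α - 1) ≤ (e ^ (α' - 1)) ^ (α - 1) := rpow_le_rpow hu0 hu h.sub_one_pos.le
      _ = e := by rw [← rpow_mul he, hexp, rpow_one]
  have hpow : u ^ α ≤ u * e := by
    calc u ^ α = u * u ^ (α - 1) := by
          rw [← rpow_one_add' hu0 (by simp [h.ne_zero]), add_sub_cancel]
      _ ≤ u * e := mul_le_mul_of_nonneg_left hua hu0
  have he' : e ^ α' = e ^ (α' - 1) * e := by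
    rw [← rpow_add_one' he (by simp [h.symm.ne_zero]), sub_add_cancel]
  calc θ * (e ^ α' / α') = θ * e ^ (α' - 1) * e * α'⁻¹ := by rw [he']; ring
    _ ≤ u * e * α'⁻¹ := by gcongr; exact h.symm.inv_nonneg
    _ = u * e - u * e / α := by rw [← h.one_sub_inv]; ring
    _ ≤ u * e - u ^ α / α := by gcongr; exact h.pos.le

lemma exp_mul_sub_le_mul_exp {α α' c lam : ℝ} (h : α.HolderConjugate α') (hc : 0 ≤ c)
    (hlam : 0 < lam) (r η : ℝ) :
    exp (c * (r * η - |r| ^ α / α)) ≤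
      exp (c * (|lam * η| ^ α' / α')) * exp (-(c * (1 - lam⁻¹ ^ α) / α) * |r| ^ α) := by
  rw [← exp_add, exp_le_exp]
  linear_combination mul_le_mul_of_nonneg_left (mul_sub_rpow_div_le h hlam r η) hc

lemma mul_one_sub_inv_rpow_div_pos {α c lam : ℝ} (hα : 0 < α) (hc : 0 < c) (hlam : 1 < lam) :
    0 < c * (1 - lam⁻¹ ^ α) / α := by
  have : lam⁻¹ ^ α < 1 := rpow_lt_one (by positivity) (inv_lt_one_of_one_lt₀ hlam) hα
  have : 0 < 1 - lam⁻¹ ^ α := by linarith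
  positivity

lemma integrable_exp_mul_sub {α c : ℝ} (hα : 1 < α) (hc : 0 < c) (η : ℝ) :
    Integrable fun r : ℝ => exp (c * (r * η - |r| ^ α / α)) := by
  have h := Real.HolderConjugate.conjExponent hα
  have hb := mul_one_sub_inv_rpow_div_pos h.pos hc one_lt_two
  refine ((integrable_exp_neg_mul_abs_rpow hb h.pos).const_mul
    (exp (c * (|2 * η| ^ α.conjExponent / α.conjExponent)))).mono' (by fun_prop)
    (.of_forall fun r => ?_)
  rw [norm_of_nonneg (exp_pos _).le]
  exact exp_mul_sub_le_mul_exp h hc.le two_pos r η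

lemma integral_exp_mul_sub_le {α α' c lam : ℝ} (h : α.HolderConjugate α') (hc : 0 < c)
    (hlam : 1 < lam) (η : ℝ) :
    ∫ r, exp (c * (r * η - |r| ^ α / α)) ≤
      (∫ r, exp (-(c * (1 - lam⁻¹ ^ α) / α) * |r| ^ α)) * exp (c * (|lam * η| ^ α' / α')) := by
  have hb := mul_one_sub_inv_rpow_div_pos h.pos hc hlam
  rw [mul_comm, ← integral_const_mul]
  exact integral_mono_of_nonneg (.of_forall fun r => (exp_pos _).le)
    ((integrable_exp_neg_mul_abs_rpow hb h.pos).const_mul _)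
    (.of_forall fun r => exp_mul_sub_le_mul_exp h hc.le (by linarith) r η)

lemma integral_exp_mul_neg_sub (c α η : ℝ) :
    ∫ r, exp (c * (r * -η - |r| ^ α / α)) = ∫ r, exp (c * (r * η - |r| ^ α / α)) := by
  rw [← integral_neg_eq_self]
  simp only [abs_neg, neg_mul_neg]

lemma exp_neg_div_le_integral_exp_mul_sub {α c η : ℝ} (hα : 1 < α) (hc : 0 < c) (hη : 0 ≤ η) :
    exp (-(c / α)) ≤ ∫ r, exp (c * (r * η - |r| ^ α / α)) := by
  have hm : ∀ r ∈ Icc (0 : ℝ) 1, exp (-(c / α)) ≤ exp (c * (r * η - |r| ^ α / α)) := by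
    intro r ⟨hr0, hr1⟩
    have : |r| ^ α ≤ 1 := rpow_le_one (abs_nonneg r) (abs_le.2 ⟨by linarith, hr1⟩) (by linarith)
    have : |r| ^ α / α ≤ 1 / α := by gcongr
    rw [exp_le_exp]
    linear_combination
      mul_nonneg hc.le (mul_nonneg hr0 hη) + mul_le_mul_of_nonneg_left this hc.le
  simpa using mul_sub_le_integral_of_le_on_Icc (integrable_exp_mul_sub hα hc η)
    (fun r => (exp_pos _).le) zero_le_one hm

lemma mul_exp_le_integral_exp_mul_sub {α α' c θ η : ℝ} (h : α.HolderConjugate α') (hc : 0 < c)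
    (hθ0 : 0 ≤ θ) (hθ1 : θ ≤ 1) (hη : 0 ≤ η) :
    (1 - θ) * η ^ (α' - 1) * exp (c * (θ * (η ^ α' / α'))) ≤
      ∫ r, exp (c * (r * η - |r| ^ α / α)) := by
  have ht : 0 ≤ η ^ (α' - 1) := rpow_nonneg hη _
  have hm : ∀ r ∈ Icc (θ * η ^ (α' - 1)) (η ^ (α' - 1)),
      exp (c * (θ * (η ^ α' / α'))) ≤ exp (c * (r * η - |r| ^ α / α)) := by
    intro r ⟨hr0, hr1⟩
    rw [exp_le_exp, abs_of_nonneg (le_trans (by positivity) hr0)]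
    exact mul_le_mul_of_nonneg_left (rpow_div_le_mul_sub_rpow_div h hη hθ0 hr0 hr1) hc.le
  have := mul_sub_le_integral_of_le_on_Icc (integrable_exp_mul_sub h.lt hc η)
    (fun r => (exp_pos _).le) (mul_le_of_le_one_left ht hθ1) hm
  linarith

lemma min_mul_exp_le_integral_exp_mul_sub {α α' c lam : ℝ} (h : α.HolderConjugate α')
    (hc : 0 < c) (hlam : 1 ≤ lam) (η : ℝ) :
    min (exp (-c)) (1 - lam⁻¹ ^ α') * exp (c * (|η / lam| ^ α' / α')) ≤
      ∫ r, exp (c * (r * η - |r| ^ α / α)) := by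
  wlog hη : 0 ≤ η generalizing η
  · have := this (-η) (by linarith)
    rwa [integral_exp_mul_neg_sub, neg_div, abs_neg] at this
  have hlam0 : 0 < lam := by linarith
  rcases le_total η 1 with hη1 | hη1
  · have hq : |η / lam| ^ α' ≤ 1 := by
      rw [abs_of_nonneg (by positivity)]
      exact rpow_le_one (by positivity) ((div_le_one hlam0).2 (hη1.trans hlam)) h.symm.pos.le
    calc min (exp (-c)) (1 - lam⁻¹ ^ α') * exp (c * (|η / lam| ^ α' / α'))
        ≤ exp (-c) * exp (c * α'⁻¹) := by
          gcongr
          · exact min_le_left _ _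
          · rw [div_eq_mul_inv]; exact mul_le_of_le_one_left h.symm.inv_nonneg hq
      _ = exp (-(c / α)) := by rw [← exp_add, ← h.one_sub_inv]; ring_nf
      _ ≤ _ := exp_neg_div_le_integral_exp_mul_sub h.lt hc hη
  · have hθ1 : lam⁻¹ ^ α' ≤ 1 :=
      rpow_le_one (by positivity) (inv_le_one_of_one_le₀ hlam) h.symm.pos.le
    have hq : |η / lam| ^ α' = lam⁻¹ ^ α' * η ^ α' := by
      rw [abs_of_nonneg (by positivity), div_eq_inv_mul, mul_rpow (by positivity) hη]
    calc min (exp (-c)) (1 - lam⁻¹ ^ α') * exp (c * (|η / lam| ^ α' / α'))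
        ≤ (1 - lam⁻¹ ^ α') * η ^ (α' - 1) * exp (c * (lam⁻¹ ^ α' * (η ^ α' / α'))) := by
          rw [hq, mul_div_assoc]
          gcongr
          calc min (exp (-c)) (1 - lam⁻¹ ^ α') ≤ 1 - lam⁻¹ ^ α' := min_le_right _ _
            _ ≤ _ := le_mul_of_one_le_right (by linarith) (one_le_rpow hη1 h.symm.sub_one_pos.le)
      _ ≤ _ := mul_exp_le_integral_exp_mul_sub h hc (by positivity) hθ1 hη

theorem two_sided_estimate (α α' τ lam : ℝ) (hα : 1 < α) (hα' : 1/α + 1/α' = 1)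
    (hτ : 0 < τ) (hlam : 1 < lam) :
    ∃ C D : ℝ, 0 < C ∧ 0 < D ∧ ∀ η : ℝ,
      D * Real.exp (2 * τ * (|η / lam| ^ α' / α'))
          ≤ ∫ r : ℝ, Real.exp (2 * τ * (r * η - |r| ^ α / α)) ∧
      (∫ r : ℝ, Real.exp (2 * τ * (r * η - |r| ^ α / α)))
          ≤ C * Real.exp (2 * τ * (|lam * η| ^ α' / α')) := by
  have h : α.HolderConjugate α' := holderConjugate_iff.2 ⟨hα, by simpa only [one_div] using hα'⟩
  have hc : 0 < 2 * τ := by positivity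
  have hθ : lam⁻¹ ^ α' < 1 := rpow_lt_one (by positivity) (inv_lt_one_of_one_lt₀ hlam) h.symm.pos
  refine ⟨_, _, integral_exp_pos ?_, lt_min (exp_pos _) (sub_pos.2 hθ), fun η =>
    ⟨min_mul_exp_le_integral_exp_mul_sub h hc hlam.le η, integral_exp_mul_sub_le h hc hlam η⟩⟩
  exact integrable_exp_neg_mul_abs_rpow (mul_one_sub_inv_rpow_div_pos h.pos hc hlam) h.pos
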